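/- arXiv:2408.06613 — 9 statements merged into one kernel-verified Lean document; each statement's English description precedes it below -/
import Mathlib

section
/- Let $x : \mathbb{R} \to \mathbb{R}^N$ be differentiable and satisfy $\dot{x}(t) = S(x(t))\nabla H(x(t)) - D(t)x(t)$, where for every $y$ the matrix $S(y)$ is skew-symmetric and $H$ is continuously differentiable. Let $I : \mathbb{R}^N \to \mathbb{R}$ be continuously differentiable with $\nabla I(y)^T S(y)\nabla H(y) = 0$ and $\nabla I(y)^T D(t)y = \eta(t) I(y)$ for all $y$ and $t$, where $\eta : \mathbb{R} \to \mathbb{R}$ is continuous. Then for all $t \ge 0$, $I(x(t)) = e^{-\phi(t)} I(x(0))$ where $\phi(t) = \int_0^t \eta(s)\,ds$; in particular the invariant dissipates at the exponential rate $e^{-\int_0^t \eta(s)ds}$. -/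
open Matrix MeasureTheory

/-! Along a trajectory the chain rule and the two invariance identities give
`d/dt I(x(t)) = -η(t) I(x(t))`, and any solution of `f' = -η f` with `η` continuous satisfies
`f(t) = exp(-∫₀ᵗ η) f(0)` because `exp(∫₀ᵗ η) f(t)` has zero derivative. -/

theorem eq_exp_neg_integral_smul_of_hasDerivAt {E : Type*} [NormedAddCommGroup E]
    [NormedSpace ℝ E] {f : ℝ → E} {η : ℝ → ℝ} (hη : Continuous η)
    (hf : ∀ t, HasDerivAt f (-η t • f t) t) (t : ℝ) :
    f t = Real.exp (-∫ s in (0 : ℝ)..t, η s) • f 0 := by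
  set φ : ℝ → ℝ := fun t => ∫ s in (0 : ℝ)..t, η s
  have hφ : ∀ t, HasDerivAt φ (η t) t := fun t => (hη.integral_hasStrictDerivAt 0 t).hasDerivAt
  have hconst : ∀ t, HasDerivAt (fun t => Real.exp (φ t) • f t) 0 t := by
    intro t
    have h := (hφ t).exp.smul (hf t)
    rwa [smul_smul, ← add_smul, mul_neg, neg_add_cancel, zero_smul] at h
  have hconserved : Real.exp (φ t) • f t = f 0 := by
    simpa [φ] using is_const_of_deriv_eq_zero (fun s => (hconst s).differentiableAt)
      (fun s => (hconst s).deriv) t 0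
  rw [← hconserved, smul_smul, ← Real.exp_add, neg_add_cancel, Real.exp_zero, one_smul]

theorem hasDerivAt_conformalInvariant_comp {N : ℕ}
    {S : (Fin N → ℝ) → Matrix (Fin N) (Fin N) ℝ} {gradH : (Fin N → ℝ) → (Fin N → ℝ)}
    {D : ℝ → Matrix (Fin N) (Fin N) ℝ} {x : ℝ → (Fin N → ℝ)}
    {I : (Fin N → ℝ) → ℝ} {gradI : (Fin N → ℝ) → (Fin N → ℝ)} {η : ℝ → ℝ} {t : ℝ}
    (hx : HasDerivAt x ((S (x t)).mulVec (gradH (x t)) - (D t).mulVec (x t)) t)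
    (hI : DifferentiableAt ℝ I (x t))
    (hgradI : ∀ w, (fderiv ℝ I (x t)) w = dotProduct (gradI (x t)) w)
    (hinv : dotProduct (gradI (x t)) ((S (x t)).mulVec (gradH (x t))) = 0)
    (hdiss : dotProduct (gradI (x t)) ((D t).mulVec (x t)) = η t * I (x t)) :
    HasDerivAt (fun t => I (x t)) (-η t * I (x t)) t := by
  have h := hI.hasFDerivAt.comp_hasDerivAt t hx
  rwa [hgradI, dotProduct_sub, hinv, hdiss, zero_sub, ← neg_mul] at h

theorem damped_hamiltonian_conformal_invariant_decay_general
    {N : ℕ}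
    (S : (Fin N → ℝ) → Matrix (Fin N) (Fin N) ℝ)
    (gradH : (Fin N → ℝ) → (Fin N → ℝ))
    (D : ℝ → Matrix (Fin N) (Fin N) ℝ)
    (x : ℝ → (Fin N → ℝ))
    (hx : ∀ t, HasDerivAt x ((S (x t)).mulVec (gradH (x t)) - (D t).mulVec (x t)) t)
    (I : (Fin N → ℝ) → ℝ) (gradI : (Fin N → ℝ) → (Fin N → ℝ))
    (hI : ContDiff ℝ 1 I)
    (hgradI : ∀ y w, (fderiv ℝ I y) w = dotProduct (gradI y) w)
    (η : ℝ → ℝ) (hη : Continuous η)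
    (hinv : ∀ y, dotProduct (gradI y) ((S y).mulVec (gradH y)) = 0)
    (hdiss : ∀ t y, dotProduct (gradI y) ((D t).mulVec y) = η t * I y) :
    ∀ t, 0 ≤ t → I (x t) = Real.exp (-(∫ s in (0:ℝ)..t, η s)) * I (x 0) := by
  intro t _
  exact eq_exp_neg_integral_smul_of_hasDerivAt hη (fun s =>
    hasDerivAt_conformalInvariant_comp (hx s) (hI.differentiable one_ne_zero _) (hgradI _)
      (hinv _) (hdiss s _)) t

/-- For a differentiable solution `x` of the damped Hamiltonian system
`ẋ = S(x)∇H(x) - D(t)x`, a continuously differentiable conformal invariant `I`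
(satisfying `∇I(y)ᵀ S(y) ∇H(y) = 0` and `∇I(y)ᵀ D(t) y = η(t) I(y)` with `η` continuous)
dissipates exponentially: `I(x(t)) = e^{-∫₀ᵗ η(s) ds} I(x(0))` for all `t ≥ 0`. -/
theorem damped_hamiltonian_conformal_invariant_decay
    {N : ℕ}
    (S : (Fin N → ℝ) → Matrix (Fin N) (Fin N) ℝ)
    (hS : ∀ y, (S y)ᵀ = -(S y))
    (H : (Fin N → ℝ) → ℝ) (gradH : (Fin N → ℝ) → (Fin N → ℝ))
    (hH : ContDiff ℝ 1 H)
    (hgradH : ∀ y w, (fderiv ℝ H y) w = dotProduct (gradH y) w)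
    (D : ℝ → Matrix (Fin N) (Fin N) ℝ)
    (x : ℝ → (Fin N → ℝ))
    (hx : ∀ t, HasDerivAt x ((S (x t)).mulVec (gradH (x t)) - (D t).mulVec (x t)) t)
    (I : (Fin N → ℝ) → ℝ) (gradI : (Fin N → ℝ) → (Fin N → ℝ))
    (hI : ContDiff ℝ 1 I)
    (hgradI : ∀ y w, (fderiv ℝ I y) w = dotProduct (gradI y) w)
    (η : ℝ → ℝ) (hη : Continuous η)
    (hinv : ∀ y, dotProduct (gradI y) ((S y).mulVec (gradH y)) = 0)
    (hdiss : ∀ t y, dotProduct (gradI y) ((D t).mulVec y) = η t * I y) :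
    ∀ t, 0 ≤ t → I (x t) = Real.exp (-(∫ s in (0:ℝ)..t, η s)) * I (x 0) :=
  damped_hamiltonian_conformal_invariant_decay_general S gradH D x hx I gradI hI hgradI η hη hinv
    hdiss
end

section
/- Let $c_1, \dots, c_s$ be distinct real numbers with associated Lagrange basis polynomials $\ell_i$ and weights $b_i = \int_0^1 \ell_i(\tau)\,d\tau$, and assume $b_i \neq 0$ for all $i$. Let $S \in \mathbb{R}^{N\times N}$ be skew-symmetric, $H : \mathbb{R}^N \to \mathbb{R}$ continuously differentiable, $t_0, h \in \mathbb{R}$, and let $v : \mathbb{R} \to \mathbb{R}^N$ be a polynomial map of degree at most $s$ satisfying the collocation conditions $\dot{v}(t_0 + c_i h) = \frac{1}{b_i}\int_0^1 \ell_i(\tau)\, S\,\nabla H(v(t_0 + \tau h))\,d\tau$ for $i = 1, \dots, s$. Then $H(v(t_0 + h)) = H(v(t_0))$. -/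
/-!
The derivative of `u τ = v (t₀ + τ h)` is a polynomial map of degree `< s`, so it equals its
Lagrange interpolant `u' τ = ∑ ℓᵢ(τ) u'(cᵢ)` on the nodes. The collocation conditions give
`u'(cᵢ) = (h / bᵢ) S wᵢ` with `wᵢ = ∫₀¹ ℓᵢ ∇H(u)`, hence
`H(u 1) - H(u 0) = ∫₀¹ ∇H(u) ⬝ᵥ u' = ∑ᵢ (h / bᵢ) wᵢ ⬝ᵥ S wᵢ = 0` by skew-symmetry of `S`.
-/

open Matrix MeasureTheory Polynomial Finset

namespace Lagrange

variable {F ι : Type*} [Field F] [DecidableEq ι] {s : Finset ι} {v : ι → F}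

theorem eval_basis_eq_prod (s : Finset ι) (v : ι → F) (i : ι) (x : F) :
    (Lagrange.basis s v i).eval x = ∏ j ∈ s.erase i, (x - v j) / (v i - v j) := by
  rw [Lagrange.basis, eval_prod]
  refine prod_congr rfl fun j _ => ?_
  simp only [basisDivisor, eval_mul, eval_C, eval_sub, eval_X]
  ring

theorem eval_eq_sum_eval_mul_eval_basis (hvs : Set.InjOn v s) {q : F[X]} (hq : q.degree < #s)
    (x : F) : q.eval x = ∑ i ∈ s, q.eval (v i) * (Lagrange.basis s v i).eval x := by
  conv_lhs => rw [eq_interpolate hvs hq]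
  simp [interpolate_apply, eval_finsetSum]

theorem eq_sum_eval_basis_smul {κ : Type*} (hvs : Set.InjOn v s) {f : F → κ → F}
    (hf : ∀ k, ∃ q : F[X], q.degree < #s ∧ ∀ x, f x k = q.eval x) (x : F) :
    f x = ∑ i ∈ s, (Lagrange.basis s v i).eval x • f (v i) := by
  funext k
  obtain ⟨q, hq, hfq⟩ := hf k
  simp only [Finset.sum_apply, Pi.smul_apply, smul_eq_mul, hfq]
  rw [eval_eq_sum_eval_mul_eval_basis hvs hq x]
  exact sum_congr rfl fun i _ => mul_comm _ _

end Lagrange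

section PolynomialMaps

variable {R 𝕜 κ : Type*} {n : ℕ}

theorem natDegree_le_comp_affine [CommSemiring R] {f : R → κ → R}
    (hf : ∀ k, ∃ p : R[X], p.natDegree ≤ n ∧ ∀ t, f t k = p.eval t) (a h : R) :
    ∀ k, ∃ p : R[X], p.natDegree ≤ n ∧ ∀ τ, f (a + τ * h) k = p.eval τ := by
  intro k
  obtain ⟨p, hpn, hfp⟩ := hf k
  refine ⟨p.comp (C a + X * C h), ?_,
    fun τ => by simp only [hfp, eval_comp, eval_add, eval_mul, eval_C, eval_X]⟩
  have hlin : (C a + X * C h).natDegree ≤ 1 := by compute_degree!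
  calc (p.comp (C a + X * C h)).natDegree ≤ p.natDegree * (C a + X * C h).natDegree :=
        natDegree_comp_le
    _ ≤ n * 1 := Nat.mul_le_mul hpn hlin
    _ = n := mul_one n

theorem degree_derivative_lt_of_natDegree_le [Semiring R] {p : R[X]} (hp : p.natDegree ≤ n) :
    (derivative p).degree < n := by
  rcases eq_or_ne p 0 with rfl | hp0
  · simp
  · exact (degree_derivative_lt hp0).trans_le (degree_le_of_natDegree_le hp)

theorem exists_hasDerivAt_of_natDegree_le [NontriviallyNormedField 𝕜] [Fintype κ]
    {f : 𝕜 → κ → 𝕜} (hf : ∀ k, ∃ p : 𝕜[X], p.natDegree ≤ n ∧ ∀ t, f t k = p.eval t) :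
    ∃ f' : 𝕜 → κ → 𝕜, (∀ t, HasDerivAt f (f' t) t) ∧
      ∀ k, ∃ q : 𝕜[X], q.degree < n ∧ ∀ t, f' t k = q.eval t := by
  choose p hpn hfp using hf
  refine ⟨fun t k => (derivative (p k)).eval t, fun t => ?_,
    fun k => ⟨_, degree_derivative_lt_of_natDegree_le (hpn k), fun t => rfl⟩⟩
  rw [hasDerivAt_pi]
  intro k
  simp only [hfp]
  exact (p k).hasDerivAt t

end PolynomialMaps

section SkewGradientFlow

variable {m n : Type*} [Fintype n]

theorem Matrix.dotProduct_mulVec_self_eq_zero_of_transpose_eq_neg {S : Matrix n n ℝ}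
    (hS : Sᵀ = -S) (w : n → ℝ) : w ⬝ᵥ S *ᵥ w = 0 := by
  have h : w ⬝ᵥ S *ᵥ w = -(w ⬝ᵥ S *ᵥ w) := by
    conv_lhs => rw [dotProduct_mulVec, ← mulVec_transpose, hS, dotProduct_comm]
    rw [neg_mulVec, dotProduct_neg]
  linarith

theorem continuous_of_fderiv_apply_eq_dotProduct {H : (n → ℝ) → ℝ} {gradH : (n → ℝ) → n → ℝ}
    (hH : ContDiff ℝ 1 H) (hgradH : ∀ y w, fderiv ℝ H y w = gradH y ⬝ᵥ w) :
    Continuous gradH := by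
  classical
  have hcoord : ∀ y k, gradH y k = fderiv ℝ H y (Pi.single k 1) := by
    simp [hgradH]
  refine continuous_pi fun k => ?_
  simp_rw [hcoord]
  exact (hH.continuous_fderiv one_ne_zero).clm_apply continuous_const

namespace intervalIntegral

variable {a b : ℝ} {f : ℝ → n → ℝ}

theorem integral_mulVec [Fintype m] (A : Matrix m n ℝ) (hf : IntervalIntegrable f volume a b) :
    ∫ x in a..b, A *ᵥ f x = A *ᵥ ∫ x in a..b, f x :=
  (LinearMap.toContinuousLinearMap (Matrix.mulVecLin A)).intervalIntegral_comp_comm hf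

theorem integral_dotProduct_const (hf : IntervalIntegrable f volume a b) (d : n → ℝ) :
    ∫ x in a..b, f x ⬝ᵥ d = (∫ x in a..b, f x) ⬝ᵥ d :=
  (LinearMap.toContinuousLinearMap ((dotProductBilin ℝ ℝ).flip d)).intervalIntegral_comp_comm hf

theorem integral_dotProduct_sum_smul {ι : Type*} (s : Finset ι) {G : ℝ → n → ℝ}
    {ℓ : ι → ℝ → ℝ} (hG : Continuous G) (hℓ : ∀ i, Continuous (ℓ i)) (d : ι → n → ℝ) :
    ∫ τ in a..b, G τ ⬝ᵥ ∑ i ∈ s, ℓ i τ • d i =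
      ∑ i ∈ s, (∫ τ in a..b, ℓ i τ • G τ) ⬝ᵥ d i := by
  have hint : ∀ i, IntervalIntegrable (fun τ => ℓ i τ • G τ) volume a b :=
    fun i => ((hℓ i).smul hG).intervalIntegrable a b
  simp_rw [dotProduct_sum, dotProduct_smul, ← smul_dotProduct]
  rw [integral_finsetSum fun i _ => ?_]
  · exact sum_congr rfl fun i _ => integral_dotProduct_const (hint i) (d i)
  · exact (((hℓ i).smul hG).dotProduct continuous_const).intervalIntegrable a b

theorem integral_grad_dotProduct_eq_sub {H : (n → ℝ) → ℝ} {gradH : (n → ℝ) → n → ℝ}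
    (hH : Differentiable ℝ H) (hgradH : ∀ y w, fderiv ℝ H y w = gradH y ⬝ᵥ w)
    {u u' : ℝ → n → ℝ} (hu : ∀ τ, HasDerivAt u (u' τ) τ)
    (hint : IntervalIntegrable (fun τ => gradH (u τ) ⬝ᵥ u' τ) volume a b) :
    ∫ τ in a..b, gradH (u τ) ⬝ᵥ u' τ = H (u b) - H (u a) := by
  refine integral_eq_sub_of_hasDerivAt (f := fun τ => H (u τ)) (fun τ _ => ?_) hint
  rw [← hgradH]
  exact (hH (u τ)).hasFDerivAt.comp_hasDerivAt τ (hu τ)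

end intervalIntegral

theorem hamiltonian_conserved_of_deriv_eq_sum_smul_integral {ι : Type*} [Fintype ι]
    {S : Matrix n n ℝ} (hS : Sᵀ = -S) {H : (n → ℝ) → ℝ} {gradH : (n → ℝ) → n → ℝ}
    (hH : ContDiff ℝ 1 H) (hgradH : ∀ y w, fderiv ℝ H y w = gradH y ⬝ᵥ w)
    {ℓ : ι → ℝ → ℝ} (hℓ : ∀ i, Continuous (ℓ i)) (β : ι → ℝ) {a b : ℝ}
    {u u' : ℝ → n → ℝ} (hu : ∀ τ, HasDerivAt u (u' τ) τ)
    (hu' : ∀ τ, u' τ = ∑ i, ℓ i τ • β i • ∫ σ in a..b, ℓ i σ • S *ᵥ gradH (u σ)) :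
    H (u b) = H (u a) := by
  have hG : Continuous fun τ => gradH (u τ) :=
    (continuous_of_fderiv_apply_eq_dotProduct hH hgradH).comp
      (continuous_iff_continuousAt.2 fun τ => (hu τ).continuousAt)
  set w : ι → n → ℝ := fun i => ∫ σ in a..b, ℓ i σ • gradH (u σ)
  have hSw : ∀ i, ∫ σ in a..b, ℓ i σ • S *ᵥ gradH (u σ) = S *ᵥ w i := fun i => by
    have hint : IntervalIntegrable (fun σ => ℓ i σ • gradH (u σ)) volume a b :=
      ((hℓ i).smul hG).intervalIntegrable a b
    simp only [w, ← intervalIntegral.integral_mulVec S hint, mulVec_smul]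
  have hu'_cont : Continuous u' := by
    rw [funext hu']
    fun_prop
  have hFTC := intervalIntegral.integral_grad_dotProduct_eq_sub (hH.differentiable one_ne_zero)
    hgradH hu ((hG.dotProduct hu'_cont).intervalIntegrable a b)
  simp only [hu', hSw, intervalIntegral.integral_dotProduct_sum_smul univ hG hℓ] at hFTC
  rw [← sub_eq_zero, ← hFTC]
  exact sum_eq_zero fun i _ => by
    rw [dotProduct_smul, dotProduct_mulVec_self_eq_zero_of_transpose_eq_neg hS, smul_zero]

end SkewGradientFlow

theorem energy_preserving_collocation_general
    {N s : ℕ}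
    (c : Fin s → ℝ) (hc : Function.Injective c)
    (ℓ : Fin s → ℝ → ℝ)
    (hℓ : ∀ i τ, ℓ i τ = ∏ j ∈ Finset.univ.erase i, (τ - c j) / (c i - c j))
    (b : Fin s → ℝ)
    (S : Matrix (Fin N) (Fin N) ℝ) (hS : Sᵀ = -S)
    (H : (Fin N → ℝ) → ℝ) (gradH : (Fin N → ℝ) → (Fin N → ℝ))
    (hH : ContDiff ℝ 1 H)
    (hgradH : ∀ y w, (fderiv ℝ H y) w = dotProduct (gradH y) w)
    (t₀ h : ℝ)
    (v : ℝ → (Fin N → ℝ))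
    (hv : ∀ k, ∃ p : Polynomial ℝ, p.natDegree ≤ s ∧ ∀ t, v t k = p.eval t)
    (hcoll : ∀ i, HasDerivAt v
      ((b i)⁻¹ • ∫ τ in (0:ℝ)..1, ℓ i τ • S.mulVec (gradH (v (t₀ + τ * h))))
      (t₀ + c i * h)) :
    H (v (t₀ + h)) = H (v t₀) := by
  obtain ⟨u', hu', hu'_poly⟩ :=
    exists_hasDerivAt_of_natDegree_le (natDegree_le_comp_affine hv t₀ h)
  have hℓ_basis : ∀ i, ℓ i = fun τ => (Lagrange.basis univ c i).eval τ := fun i =>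
    funext fun τ => by rw [hℓ, Lagrange.eval_basis_eq_prod]
  have hnode : ∀ i, u' (c i) =
      (h * (b i)⁻¹) • ∫ τ in (0:ℝ)..1, ℓ i τ • S *ᵥ gradH (v (t₀ + τ * h)) := fun i => by
    rw [mul_smul]
    exact (hu' (c i)).unique <| (hcoll i).scomp (c i) <| by
      simpa using ((hasDerivAt_id (c i)).mul_const h).const_add t₀
  have hinterp : ∀ τ, u' τ = ∑ i, ℓ i τ • u' (c i) := fun τ => by
    simpa [hℓ_basis] using Lagrange.eq_sum_eval_basis_smul hc.injOn (by simpa using hu'_poly) τ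
  simp_rw [hnode] at hinterp
  simpa using hamiltonian_conserved_of_deriv_eq_sum_smul_integral hS hH hgradH (ℓ := ℓ)
    (fun i => by rw [hℓ_basis]; exact (Lagrange.basis univ c i).continuous) _ hu' hinterp

/-- Energy preservation of the energy-preserving collocation methods.
Given distinct nodes `c₁,…,c_s` with Lagrange basis polynomials `ℓᵢ` and nonzero weights
`bᵢ = ∫₀¹ ℓᵢ`, a skew-symmetric matrix `S`, a `C¹` Hamiltonian `H`, and a polynomial map
`v` of degree at most `s` satisfying the collocation conditions
`v̇(t₀ + cᵢ h) = (1/bᵢ) ∫₀¹ ℓᵢ(τ) S ∇H(v(t₀ + τ h)) dτ`, we have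
`H(v(t₀ + h)) = H(v(t₀))`. -/
theorem energy_preserving_collocation
    {N s : ℕ}
    (c : Fin s → ℝ) (hc : Function.Injective c)
    (ℓ : Fin s → ℝ → ℝ)
    (hℓ : ∀ i τ, ℓ i τ = ∏ j ∈ Finset.univ.erase i, (τ - c j) / (c i - c j))
    (b : Fin s → ℝ) (hb : ∀ i, b i = ∫ τ in (0:ℝ)..1, ℓ i τ)
    (hbne : ∀ i, b i ≠ 0)
    (S : Matrix (Fin N) (Fin N) ℝ) (hS : Sᵀ = -S)
    (H : (Fin N → ℝ) → ℝ) (gradH : (Fin N → ℝ) → (Fin N → ℝ))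
    (hH : ContDiff ℝ 1 H)
    (hgradH : ∀ y w, (fderiv ℝ H y) w = dotProduct (gradH y) w)
    (t₀ h : ℝ)
    (v : ℝ → (Fin N → ℝ))
    (hv : ∀ k, ∃ p : Polynomial ℝ, p.natDegree ≤ s ∧ ∀ t, v t k = p.eval t)
    (hcoll : ∀ i, HasDerivAt v
      ((b i)⁻¹ • ∫ τ in (0:ℝ)..1, ℓ i τ • S.mulVec (gradH (v (t₀ + τ * h))))
      (t₀ + c i * h)) :
    H (v (t₀ + h)) = H (v t₀) :=
  energy_preserving_collocation_general c hc ℓ hℓ b S hS H gradH hH hgradH t₀ h v hv hcoll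
end

section
/- Let $c_1, \dots, c_s$ be distinct real numbers satisfying $c_{s+1-i} = 1 - c_i$ for all $i$, with Lagrange basis polynomials $\ell_i$ and weights $b_i = \int_0^1 \ell_i(\tau)\,d\tau$, and assume $b_i \neq 0$ for all $i$. Define $A_{\tau,\sigma} = \sum_{i=1}^s \frac{1}{b_i}\left(\int_0^\tau \ell_i(\alpha)\,d\alpha\right)\ell_i(\sigma)$. Then for all real $\tau, \sigma$: $A_{\tau,\sigma} + A_{1-\tau,\,1-\sigma} = 1$. -/
open Matrix MeasureTheory

/-- For symmetric distinct nodes (`c_{s+1-i} = 1 - c i`) with nonzero weights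
`bᵢ = ∫₀¹ ℓᵢ`, the continuous-stage Runge-Kutta coefficients
`A_{τ,σ} = ∑ᵢ (1/bᵢ)(∫₀^τ ℓᵢ) ℓᵢ(σ)` satisfy `A_{τ,σ} + A_{1-τ,1-σ} = 1` for all `τ, σ`. -/
theorem symmetric_nodes_coefficient_identity
    {s : ℕ}
    (hs : 0 < s)
    (c : Fin s → ℝ) (hc : Function.Injective c)
    (hsym : ∀ i : Fin s, c i.rev = 1 - c i)
    (ℓ : Fin s → ℝ → ℝ)
    (hℓ : ∀ i τ, ℓ i τ = ∏ j ∈ Finset.univ.erase i, (τ - c j) / (c i - c j))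
    (b : Fin s → ℝ) (hb : ∀ i, b i = ∫ τ in (0:ℝ)..1, ℓ i τ)
    (hbne : ∀ i, b i ≠ 0)
    (A : ℝ → ℝ → ℝ)
    (hA : ∀ τ σ, A τ σ = ∑ i, (b i)⁻¹ * ((∫ α in (0:ℝ)..τ, ℓ i α) * ℓ i σ)) :
    ∀ τ σ : ℝ, A τ σ + A (1 - τ) (1 - σ) = 1 := by
  have : NeZero s := ⟨hs.ne'⟩
  -- continuity of ℓ i
  have hcont : ∀ i, Continuous (ℓ i) := by
    intro i
    have he : ℓ i = fun x => ∏ j ∈ Finset.univ.erase i, (x - c j) / (c i - c j) :=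
      funext (hℓ i)
    rw [he]
    exact continuous_finset_prod _ fun j _ =>
      (continuous_id.sub continuous_const).div_const _
  -- flip symmetry of basis polynomials
  have hflip : ∀ (i : Fin s) (x : ℝ), ℓ i.rev x = ℓ i (1 - x) := by
    intro i x
    rw [hℓ, hℓ]
    refine Finset.prod_nbij' (fun j => j.rev) (fun j => j.rev) ?_ ?_ ?_ ?_ ?_
    · intro j hj
      simp only [Finset.mem_erase, Finset.mem_univ, and_true] at hj ⊢
      exact fun h => hj (by rw [← h, Fin.rev_rev])
    · intro j hj
      simp only [Finset.mem_erase, Finset.mem_univ, and_true] at hj ⊢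
      exact fun h => hj (Fin.rev_injective h)
    · intro j _; exact Fin.rev_rev j
    · intro j _; exact Fin.rev_rev j
    · intro j hj
      show (x - c j) / (c i.rev - c j) = ((1 - x) - c j.rev) / (c i - c j.rev)
      have h1 : (1 - x) - c j.rev = -(x - c j) := by rw [hsym]; ring
      have h2 : c i - c j.rev = -(c i.rev - c j) := by rw [hsym j, hsym i]; ring
      rw [h1, h2, neg_div_neg_eq]
  -- partition of unity
  have hsum : ∀ x : ℝ, ∑ i, ℓ i x = 1 := by
    intro x
    have h := Lagrange.sum_basis (Set.injOn_of_injective hc)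
      (Finset.univ_nonempty (α := Fin s))
    have h2 := congrArg (Polynomial.eval x) h
    rw [Polynomial.eval_finset_sum, Polynomial.eval_one] at h2
    rw [← h2]
    refine Finset.sum_congr rfl fun i _ => ?_
    rw [hℓ, Lagrange.basis, Polynomial.eval_prod]
    refine Finset.prod_congr rfl fun j _ => ?_
    simp [Lagrange.basisDivisor, div_eq_inv_mul]
  -- integral identities
  have hinteg : ∀ (i : Fin s) (u v : ℝ), IntervalIntegrable (ℓ i) volume u v :=
    fun i u v => (hcont i).intervalIntegrable u v
  have hIflip : ∀ (i : Fin s) (t : ℝ),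
      (∫ α in (0:ℝ)..(1 - t), ℓ i.rev α) = b i - ∫ α in (0:ℝ)..t, ℓ i α := by
    intro i t
    have h1 : (∫ α in (0:ℝ)..(1 - t), ℓ i.rev α)
        = ∫ α in (0:ℝ)..(1 - t), ℓ i (1 - α) := by
      simp only [hflip]
    rw [h1, intervalIntegral.integral_comp_sub_left (ℓ i) 1]
    have h3 : (1 : ℝ) - (1 - t) = t := by ring
    rw [h3, sub_zero, hb]
    rw [← intervalIntegral.integral_interval_sub_left (hinteg i 0 1) (hinteg i 0 t)]
  have hbflip : ∀ i : Fin s, b i.rev = b i := by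
    intro i
    have := hIflip i 0
    simpa [hb] using this
  intro τ σ
  have key : ∀ i : Fin s, (b i)⁻¹ * ((∫ α in (0:ℝ)..(1 - τ), ℓ i α) * ℓ i (1 - σ))
      = (b i.rev)⁻¹ * ((b i.rev - ∫ α in (0:ℝ)..τ, ℓ i.rev α) * ℓ i.rev σ) := by
    intro i
    have e1 := hIflip i.rev τ; rw [Fin.rev_rev] at e1
    have e2 := hflip i.rev (1 - σ); rw [Fin.rev_rev, sub_sub_cancel] at e2
    rw [e1, ← e2, ← hbflip i]
  have hA2 : A (1 - τ) (1 - σ)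
      = ∑ i, (b i)⁻¹ * ((b i - ∫ α in (0:ℝ)..τ, ℓ i α) * ℓ i σ) := by
    rw [hA]
    exact Fintype.sum_bijective Fin.rev Fin.rev_bijective _ _ key
  rw [hA, hA2, ← Finset.sum_add_distrib]
  have hterm : ∀ i : Fin s,
      (b i)⁻¹ * ((∫ α in (0:ℝ)..τ, ℓ i α) * ℓ i σ)
      + (b i)⁻¹ * ((b i - ∫ α in (0:ℝ)..τ, ℓ i α) * ℓ i σ) = ℓ i σ := by
    intro i
    rw [← mul_add, ← add_mul]
    have h4 : (∫ α in (0:ℝ)..τ, ℓ i α) + (b i - ∫ α in (0:ℝ)..τ, ℓ i α) = b i := by ring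
    rw [h4, inv_mul_cancel_left₀ (hbne i)]
  rw [Finset.sum_congr rfl fun i _ => hterm i, hsum]
end

section
/- Let $c_1, \dots, c_s$ be distinct real numbers satisfying $c_{s+1-i} = 1 - c_i$ for all $i$, with Lagrange basis polynomials $\ell_i$, weights $b_i = \int_0^1 \ell_i \neq 0$, and coefficients $A_{\tau,\sigma} = \sum_{i=1}^s \frac{1}{b_i}\left(\int_0^\tau \ell_i\right)\ell_i(\sigma)$. Let $g : [0,1] \to \mathbb{R}^N$ be integrable, $h \in \mathbb{R}$, $u_0, u_1 \in \mathbb{R}^N$, and $V : [0,1] \to \mathbb{R}^N$ satisfy $u_1 = u_0 + h\int_0^1 g(\sigma)\,d\sigma$ and $V(\tau) = u_0 + h\int_0^1 A_{\tau,\sigma}\, g(\sigma)\,d\sigma$ for all $\tau \in [0,1]$. Then $u_0 = u_1 - h\int_0^1 g(1-\sigma)\,d\sigma$ and, for all $\tau \in [0,1]$, $V(1-\tau) = u_1 - h\int_0^1 A_{\tau,\sigma}\, g(1-\sigma)\,d\sigma$; i.e., the transformed stages and endpoints of the collocation scheme also satisfy the scheme with $u_0, u_1$ exchanged and $h$ replaced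 by $-h$, so the method is symmetric. -/
open MeasureTheory

/-!
Symmetric nodes make the Lagrange basis reflect, `ℓ_{s+1-i}(1-σ) = ℓ_i(σ)`. Hence
`b_{s+1-i} = b_i` and `∫₀^{1-τ} ℓ_{s+1-i} = b_i - ∫₀^τ ℓ_i`, and together with `∑ᵢ ℓ_i = 1`
this gives `A_{1-τ,1-σ} = 1 - A_{τ,σ}`. Substituting `σ ↦ 1-σ` in the stage equation for
`V(1-τ)` and using this identity turns it into the stage equation of the reversed step.
-/

namespace Lagrange

open Polynomial Finset

variable {K ι : Type*} [Field K] [Fintype ι] [DecidableEq ι]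

theorem eval_basis_univ (c : ι → K) (i : ι) (τ : K) :
    (Lagrange.basis univ c i).eval τ = ∏ j ∈ univ.erase i, (τ - c j) / (c i - c j) := by
  simp only [Lagrange.basis, eval_prod, basisDivisor, eval_mul, eval_C, eval_sub, eval_X]
  exact prod_congr rfl fun j _ => inv_mul_eq_div _ _

theorem eval_basis_univ_reflect {c : ι → K} (e : ι ≃ ι) {a : K} (hc : ∀ i, c (e i) = a - c i)
    (i : ι) (τ : K) :
    (Lagrange.basis univ c (e i)).eval (a - τ) = (Lagrange.basis univ c i).eval τ := by
  have herase : univ.erase (e i) = (univ.erase i).map e.toEmbedding := by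
    rw [map_erase, map_univ_equiv]
    rfl
  rw [eval_basis_univ, eval_basis_univ, herase, prod_map]
  refine prod_congr rfl fun j _ => ?_
  simp only [Equiv.coe_toEmbedding, hc]
  rw [show a - τ - (a - c j) = -(τ - c j) by ring,
    show a - c i - (a - c j) = -(c i - c j) by ring, neg_div_neg_eq]

end Lagrange

section Collocation

variable {ι : Type*}

theorem integral_zero_one_sub_of_reflect {ℓ : ι → ℝ → ℝ} {e : ι ≃ ι}
    (hrefl : ∀ i σ, ℓ (e i) (1 - σ) = ℓ i σ) {i : ι}
    (hℓ : ∀ a b, IntervalIntegrable (ℓ i) volume a b) (τ : ℝ) :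
    ∫ α in (0:ℝ)..(1 - τ), ℓ (e i) α =
      (∫ α in (0:ℝ)..1, ℓ i α) - ∫ α in (0:ℝ)..τ, ℓ i α := by
  have hsub := intervalIntegral.integral_comp_sub_left (ℓ (e i)) (1 : ℝ) (a := τ) (b := 1)
  simp only [sub_self, hrefl] at hsub
  rw [← hsub, intervalIntegral.integral_interval_sub_left (hℓ 0 1) (hℓ 0 τ)]

variable [Fintype ι]

/-- `A_{τ,σ}`, with the weight `b_i` written out as `∫₀¹ ℓ_i`. -/
noncomputable def collocationCoeff (ℓ : ι → ℝ → ℝ) (τ σ : ℝ) : ℝ :=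
  ∑ i, (∫ α in (0:ℝ)..1, ℓ i α)⁻¹ * ((∫ α in (0:ℝ)..τ, ℓ i α) * ℓ i σ)

theorem continuous_collocationCoeff {ℓ : ι → ℝ → ℝ} (hℓ : ∀ i, Continuous (ℓ i)) (τ : ℝ) :
    Continuous (collocationCoeff ℓ τ) :=
  continuous_finsetSum _ fun i _ => continuous_const.mul (continuous_const.mul (hℓ i))

variable {ℓ : ι → ℝ → ℝ} {e : ι ≃ ι}

theorem collocationCoeff_one_sub_one_sub (hrefl : ∀ i σ, ℓ (e i) (1 - σ) = ℓ i σ)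
    (hℓ : ∀ i, Continuous (ℓ i)) (hb : ∀ i, ∫ α in (0:ℝ)..1, ℓ i α ≠ 0)
    (hsum : ∀ σ, ∑ i, ℓ i σ = 1) (τ σ : ℝ) :
    collocationCoeff ℓ (1 - τ) (1 - σ) = 1 - collocationCoeff ℓ τ σ := by
  have hint : ∀ i a b, IntervalIntegrable (ℓ i) volume a b := fun i =>
    (hℓ i).intervalIntegrable
  have hpartial := fun i => integral_zero_one_sub_of_reflect hrefl (hint i)
  have hweight : ∀ i, ∫ α in (0:ℝ)..1, ℓ (e i) α = ∫ α in (0:ℝ)..1, ℓ i α := fun i => by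
    simpa using hpartial i 0
  have hterm : ∀ i, (∫ α in (0:ℝ)..1, ℓ (e i) α)⁻¹ *
      ((∫ α in (0:ℝ)..(1 - τ), ℓ (e i) α) * ℓ (e i) (1 - σ)) =
      ℓ i σ - (∫ α in (0:ℝ)..1, ℓ i α)⁻¹ * ((∫ α in (0:ℝ)..τ, ℓ i α) * ℓ i σ) := fun i => by
    rw [hweight, hpartial, hrefl, sub_mul, mul_sub, ← mul_assoc, inv_mul_cancel₀ (hb i), one_mul]
  unfold collocationCoeff
  rw [← e.sum_comp, Finset.sum_congr rfl fun i _ => hterm i, Finset.sum_sub_distrib, hsum]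

end Collocation

theorem collocation_scheme_reverse {E : Type*} [NormedAddCommGroup E] [NormedSpace ℝ E]
    {A : ℝ → ℝ → ℝ} (hA : ∀ τ σ, A (1 - τ) (1 - σ) = 1 - A τ σ)
    (hAc : ∀ τ, Continuous (A τ)) {g : ℝ → E} (hg : IntervalIntegrable g volume 0 1)
    {h : ℝ} {u₀ u₁ : E} {V : ℝ → E}
    (hu1 : u₁ = u₀ + h • ∫ σ in (0:ℝ)..1, g σ)
    (hV : ∀ τ ∈ Set.Icc (0:ℝ) 1, V τ = u₀ + h • ∫ σ in (0:ℝ)..1, A τ σ • g σ) :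
    u₀ = u₁ - h • (∫ σ in (0:ℝ)..1, g (1 - σ)) ∧
      ∀ τ ∈ Set.Icc (0:ℝ) 1,
        V (1 - τ) = u₁ - h • ∫ σ in (0:ℝ)..1, A τ σ • g (1 - σ) := by
  have hflip : ∀ f : ℝ → E, ∫ σ in (0:ℝ)..1, f (1 - σ) = ∫ σ in (0:ℝ)..1, f σ := fun f => by
    simp
  have hg' : IntervalIntegrable (fun σ => g (1 - σ)) volume 0 1 := by
    simpa using (hg.comp_sub_left 1).symm
  refine ⟨by rw [hflip, hu1]; abel, fun τ hτ => ?_⟩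
  have hstage : ∫ σ in (0:ℝ)..1, A (1 - τ) σ • g σ =
      (∫ σ in (0:ℝ)..1, g (1 - σ)) - ∫ σ in (0:ℝ)..1, A τ σ • g (1 - σ) := by
    calc ∫ σ in (0:ℝ)..1, A (1 - τ) σ • g σ
        = ∫ σ in (0:ℝ)..1, A (1 - τ) (1 - σ) • g (1 - σ) :=
          (hflip fun σ => A (1 - τ) σ • g σ).symm
      _ = ∫ σ in (0:ℝ)..1, (g (1 - σ) - A τ σ • g (1 - σ)) := by
          simp only [hA, sub_smul, one_smul]
      _ = _ := intervalIntegral.integral_sub hg' (hg'.continuousOn_smul (hAc τ).continuousOn)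
  have hτ' : 1 - τ ∈ Set.Icc (0:ℝ) 1 := ⟨by linarith [hτ.2], by linarith [hτ.1]⟩
  rw [hV _ hτ', hstage, hflip, hu1, smul_sub]
  abel

/-- Symmetry of the (exponential) energy-preserving collocation scheme.
With symmetric distinct nodes, nonzero weights, and coefficients
`A_{τ,σ} = ∑ᵢ (1/bᵢ)(∫₀^τ ℓᵢ) ℓᵢ(σ)`, if `g : [0,1] → ℝᴺ` is integrable and
`u₁ = u₀ + h ∫₀¹ g(σ) dσ`, `V(τ) = u₀ + h ∫₀¹ A_{τ,σ} g(σ) dσ` for `τ ∈ [0,1]`, then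
`u₀ = u₁ - h ∫₀¹ g(1-σ) dσ` and `V(1-τ) = u₁ - h ∫₀¹ A_{τ,σ} g(1-σ) dσ` for `τ ∈ [0,1]`. -/
theorem exponential_collocation_symmetric
    {N s : ℕ} (hs : 0 < s)
    (c : Fin s → ℝ) (hc : Function.Injective c)
    (hsym : ∀ i : Fin s, c i.rev = 1 - c i)
    (ℓ : Fin s → ℝ → ℝ)
    (hℓ : ∀ i τ, ℓ i τ = ∏ j ∈ Finset.univ.erase i, (τ - c j) / (c i - c j))
    (b : Fin s → ℝ) (hb : ∀ i, b i = ∫ τ in (0:ℝ)..1, ℓ i τ)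
    (hbne : ∀ i, b i ≠ 0)
    (A : ℝ → ℝ → ℝ)
    (hA : ∀ τ σ, A τ σ = ∑ i, (b i)⁻¹ * ((∫ α in (0:ℝ)..τ, ℓ i α) * ℓ i σ))
    (g : ℝ → (Fin N → ℝ)) (hg : IntervalIntegrable g MeasureTheory.volume 0 1)
    (h : ℝ) (u₀ u₁ : Fin N → ℝ) (V : ℝ → (Fin N → ℝ))
    (hu1 : u₁ = u₀ + h • ∫ σ in (0:ℝ)..1, g σ)
    (hV : ∀ τ ∈ Set.Icc (0:ℝ) 1, V τ = u₀ + h • ∫ σ in (0:ℝ)..1, A τ σ • g σ) :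
    u₀ = u₁ - h • (∫ σ in (0:ℝ)..1, g (1 - σ)) ∧
      ∀ τ ∈ Set.Icc (0:ℝ) 1,
        V (1 - τ) = u₁ - h • ∫ σ in (0:ℝ)..1, A τ σ • g (1 - σ) := by
  have hℓ' : ∀ i τ, ℓ i τ = (Lagrange.basis Finset.univ c i).eval τ := fun i τ => by
    rw [hℓ, Lagrange.eval_basis_univ]
  have hrefl : ∀ i σ, ℓ (Fin.revPerm i) (1 - σ) = ℓ i σ := fun i σ => by
    simp only [hℓ']
    exact Lagrange.eval_basis_univ_reflect Fin.revPerm hsym i σ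
  have hcont : ∀ i, Continuous (ℓ i) := fun i => by
    simpa only [← funext (hℓ' i)] using (Lagrange.basis Finset.univ c i).continuous
  have hsum : ∀ σ, ∑ i, ℓ i σ = 1 := fun σ => by
    have : Nonempty (Fin s) := ⟨⟨0, hs⟩⟩
    simp only [hℓ', ← Polynomial.eval_finsetSum,
      Lagrange.sum_basis hc.injOn Finset.univ_nonempty, Polynomial.eval_one]
  have hAeq : A = collocationCoeff ℓ := by
    ext τ σ
    simp only [hA, collocationCoeff, hb]
  subst hAeq
  exact collocation_scheme_reverse
    (collocationCoeff_one_sub_one_sub hrefl hcont (fun i => hb i ▸ hbne i) hsum)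
    (continuous_collocationCoeff hcont) hg hu1 hV
end

section
/- Let $c_1, c_2$ be distinct real numbers such that the associated interpolatory quadrature has order at least three, i.e., $\int_0^1 (\tau - c_1)(\tau - c_2)\,d\tau = 0$, and assume $b_1, b_2 \neq 0$ where $b_i = \int_0^1 \ell_i(\tau)\,d\tau$. Then the coefficient function $A_{\tau,\sigma} = \sum_{i=1}^2 \frac{1}{b_i}\left(\int_0^\tau \ell_i(\alpha)\,d\alpha\right)\ell_i(\sigma)$ satisfies, for all real $\tau, \sigma$: $A_{\tau,\sigma} = -6\tau(1-\tau)\sigma + \tau(4 - 3\tau)$. -/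
/-!
Both Lagrange basis polynomials are linear, so `A τ σ` is an explicit rational function of the
nodes. The order-three condition says exactly that `(1/2 - c₁)(1/2 - c₂) = -1/12`; this makes
the reciprocal weights polynomial, `1 / b₁ = -12 (c₁ - c₂)(1/2 - c₁)`, and after clearing the
remaining factor `c₁ - c₂` every dependence on the nodes cancels.
-/

open MeasureTheory intervalIntegral

theorem integral_sub_mul_sub_unitInterval (c₁ c₂ : ℝ) :
    ∫ τ in (0:ℝ)..1, (τ - c₁) * (τ - c₂) = (1/2 - c₁) * (1/2 - c₂) + 1/12 := by
  have h (τ : ℝ) : (τ - c₁) * (τ - c₂) = τ ^ 2 - (c₁ + c₂) * τ + c₁ * c₂ := by ring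
  simp only [h]
  rw [integral_add ((intervalIntegrable_pow 2).sub (intervalIntegrable_id.const_mul _))
      intervalIntegrable_const,
    integral_sub (intervalIntegrable_pow 2) (intervalIntegrable_id.const_mul _),
    intervalIntegral.integral_const_mul, integral_pow, integral_id, intervalIntegral.integral_const,
    smul_eq_mul]
  ring

theorem integral_sub_div (c d t : ℝ) : ∫ α in (0:ℝ)..t, (α - c) / d = t * (t / 2 - c) / d := by
  rw [intervalIntegral.integral_div, integral_sub intervalIntegrable_id intervalIntegrable_const,
    integral_id, intervalIntegral.integral_const, smul_eq_mul]
  ring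

theorem two_stage_coefficient_eq_of_order_three (c₁ c₂ τ σ : ℝ) (hc : c₁ ≠ c₂)
    (hord : (1/2 - c₁) * (1/2 - c₂) = -1/12) :
    (1 * (1/2 - c₂) / (c₁ - c₂))⁻¹ * (τ * (τ / 2 - c₂) / (c₁ - c₂) * ((σ - c₂) / (c₁ - c₂))) +
      (1 * (1/2 - c₁) / (c₂ - c₁))⁻¹ * (τ * (τ / 2 - c₁) / (c₂ - c₁) * ((σ - c₁) / (c₂ - c₁)))
      = -6 * τ * (1 - τ) * σ + τ * (4 - 3 * τ) := by
  have hd : c₁ - c₂ ≠ 0 := sub_ne_zero.mpr hc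
  have hd' : c₂ - c₁ ≠ 0 := sub_ne_zero.mpr hc.symm
  have hinv₁ : (1/2 - c₁)⁻¹ = -12 * (1/2 - c₂) :=
    inv_eq_of_mul_eq_one_right (by linear_combination -12 * hord)
  have hinv₂ : (1/2 - c₂)⁻¹ = -12 * (1/2 - c₁) :=
    inv_eq_of_mul_eq_one_right (by linear_combination -12 * hord)
  rw [one_mul, one_mul, inv_div, inv_div, div_eq_mul_inv (c₁ - c₂), hinv₂,
    div_eq_mul_inv (c₂ - c₁), hinv₁]
  field_simp
  linear_combination -48 * τ * (c₁ - c₂) * (c₂ - c₁) * hord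

theorem two_stage_fourth_order_coefficient_general
    (c₁ c₂ : ℝ) (hc : c₁ ≠ c₂)
    (hord : (∫ τ in (0:ℝ)..1, (τ - c₁) * (τ - c₂)) = 0)
    (ℓ₁ ℓ₂ : ℝ → ℝ)
    (hℓ₁ : ∀ τ, ℓ₁ τ = (τ - c₂) / (c₁ - c₂))
    (hℓ₂ : ∀ τ, ℓ₂ τ = (τ - c₁) / (c₂ - c₁))
    (b₁ b₂ : ℝ)
    (hb₁ : b₁ = ∫ τ in (0:ℝ)..1, ℓ₁ τ)
    (hb₂ : b₂ = ∫ τ in (0:ℝ)..1, ℓ₂ τ)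
    (A : ℝ → ℝ → ℝ)
    (hA : ∀ τ σ, A τ σ =
      b₁⁻¹ * ((∫ α in (0:ℝ)..τ, ℓ₁ α) * ℓ₁ σ) + b₂⁻¹ * ((∫ α in (0:ℝ)..τ, ℓ₂ α) * ℓ₂ σ)) :
    ∀ τ σ : ℝ, A τ σ = -6 * τ * (1 - τ) * σ + τ * (4 - 3 * τ) := by
  have hcentred : (1/2 - c₁) * (1/2 - c₂) = -1/12 := by
    linarith [integral_sub_mul_sub_unitInterval c₁ c₂]
  obtain rfl : ℓ₁ = fun τ => (τ - c₂) / (c₁ - c₂) := funext hℓ₁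
  obtain rfl : ℓ₂ = fun τ => (τ - c₁) / (c₂ - c₁) := funext hℓ₂
  subst hb₁ hb₂
  intro τ σ
  rw [hA]
  simp only [integral_sub_div]
  exact two_stage_coefficient_eq_of_order_three c₁ c₂ τ σ hc hcentred

/-- For two distinct nodes `c₁, c₂` whose interpolatory quadrature has order
at least three (`∫₀¹ (τ-c₁)(τ-c₂) dτ = 0`) and nonzero weights, the continuous-stage
Runge-Kutta coefficient of the energy-preserving collocation method is
`A_{τ,σ} = -6τ(1-τ)σ + τ(4-3τ)`. -/
theorem two_stage_fourth_order_coefficient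
    (c₁ c₂ : ℝ) (hc : c₁ ≠ c₂)
    (hord : (∫ τ in (0:ℝ)..1, (τ - c₁) * (τ - c₂)) = 0)
    (ℓ₁ ℓ₂ : ℝ → ℝ)
    (hℓ₁ : ∀ τ, ℓ₁ τ = (τ - c₂) / (c₁ - c₂))
    (hℓ₂ : ∀ τ, ℓ₂ τ = (τ - c₁) / (c₂ - c₁))
    (b₁ b₂ : ℝ)
    (hb₁ : b₁ = ∫ τ in (0:ℝ)..1, ℓ₁ τ)
    (hb₂ : b₂ = ∫ τ in (0:ℝ)..1, ℓ₂ τ)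
    (hb₁ne : b₁ ≠ 0) (hb₂ne : b₂ ≠ 0)
    (A : ℝ → ℝ → ℝ)
    (hA : ∀ τ σ, A τ σ =
      b₁⁻¹ * ((∫ α in (0:ℝ)..τ, ℓ₁ α) * ℓ₁ σ) + b₂⁻¹ * ((∫ α in (0:ℝ)..τ, ℓ₂ α) * ℓ₂ σ)) :
    ∀ τ σ : ℝ, A τ σ = -6 * τ * (1 - τ) * σ + τ * (4 - 3 * τ) :=
  two_stage_fourth_order_coefficient_general c₁ c₂ hc hord ℓ₁ ℓ₂ hℓ₁ hℓ₂ b₁ b₂ hb₁ hb₂ A hA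
end

section
/- Define $A_{\tau,\sigma} = \tau\left((9 - 18\tau + 10\tau^2) - 12(3 - 8\tau + 5\tau^2)\sigma + 30(1 - 3\tau + 2\tau^2)\sigma^2\right)$. Then for every $\tau \in \mathbb{R}$ and every $k \in \{1, 2, 3\}$, the order conditions $\int_0^1 A_{\tau,\sigma}\,\sigma^{k-1}\,d\sigma = \frac{\tau^k}{k}$ hold. -/
open MeasureTheory

lemma poly_int (a b c : ℝ) (n : ℕ) :
    (∫ σ in (0:ℝ)..1, (a * σ ^ n + b * σ ^ (n+1) + c * σ ^ (n+2)))
      = a / (n+1) + b / (n+2) + c / (n+3) := by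
  have ip : ∀ m : ℕ, IntervalIntegrable (fun σ : ℝ => σ ^ m) volume 0 1 :=
    fun m => intervalIntegral.intervalIntegrable_pow m
  rw [intervalIntegral.integral_add, intervalIntegral.integral_add,
    intervalIntegral.integral_const_mul, intervalIntegral.integral_const_mul,
    intervalIntegral.integral_const_mul, integral_pow, integral_pow, integral_pow]
  · push_cast; ring
  · exact (ip _).const_mul _
  · exact (ip _).const_mul _
  · exact ((ip _).const_mul _).add ((ip _).const_mul _)
  · exact (ip _).const_mul _

/-- The coefficient of the sixth-order three-stage energy-preserving
collocation method,
`A_{τ,σ} = τ((9-18τ+10τ²) - 12(3-8τ+5τ²)σ + 30(1-3τ+2τ²)σ²)`,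
satisfies the order conditions `∫₀¹ A_{τ,σ} σ^{k-1} dσ = τᵏ/k` for `k = 1, 2, 3`. -/
theorem sixth_order_coefficient_order_conditions
    (A : ℝ → ℝ → ℝ)
    (hA : ∀ τ σ : ℝ, A τ σ =
      τ * ((9 - 18 * τ + 10 * τ ^ 2) - 12 * (3 - 8 * τ + 5 * τ ^ 2) * σ
        + 30 * (1 - 3 * τ + 2 * τ ^ 2) * σ ^ 2)) :
    ∀ τ : ℝ, ∀ k ∈ ({1, 2, 3} : Finset ℕ),
      (∫ σ in (0:ℝ)..1, A τ σ * σ ^ (k - 1)) = τ ^ k / (k : ℝ) := by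
  intro τ k hk
  set a : ℝ := τ * (9 - 18 * τ + 10 * τ ^ 2) with ha
  set b : ℝ := -12 * τ * (3 - 8 * τ + 5 * τ ^ 2) with hb
  set c : ℝ := 30 * τ * (1 - 3 * τ + 2 * τ ^ 2) with hc
  fin_cases hk
  · rw [intervalIntegral.integral_congr
      (g := fun σ : ℝ => a * σ ^ 0 + b * σ ^ 1 + c * σ ^ 2)
      (fun σ _ => by simp only [hA, ha, hb, hc]; ring), poly_int]
    rw [ha, hb, hc]; push_cast; ring
  · rw [intervalIntegral.integral_congr
      (g := fun σ : ℝ => a * σ ^ 1 + b * σ ^ 2 + c * σ ^ 3)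
      (fun σ _ => by simp only [hA, ha, hb, hc]; ring), poly_int]
    rw [ha, hb, hc]; push_cast; ring
  · rw [intervalIntegral.integral_congr
      (g := fun σ : ℝ => a * σ ^ 2 + b * σ ^ 3 + c * σ ^ 4)
      (fun σ _ => by simp only [hA, ha, hb, hc]; ring), poly_int]
    rw [ha, hb, hc]; push_cast; ring
end

section
/- Define $A_{\tau,\sigma} = (16\tau - 60\tau^2 + 80\tau^3 - 35\tau^4) + (-120\tau + 600\tau^2 - 900\tau^3 + 420\tau^4)\sigma + (240\tau - 1350\tau^2 + 2160\tau^3 - 1050\tau^4)\sigma^2 + (-140\tau + 840\tau^2 - 1400\tau^3 + 700\tau^4)\sigma^3$. Then for every $\tau \in \mathbb{R}$ and every $k \in \{1, 2, 3, 4\}$, the order conditions $\int_0^1 A_{\tau,\sigma}\,\sigma^{k-1}\,d\sigma = \frac{\tau^k}{k}$ hold. -/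
open MeasureTheory

lemma poly_integral (c0 c1 c2 c3 c4 c5 c6 : ℝ) :
    (∫ σ in (0:ℝ)..1, (c0 + c1 * σ + c2 * σ ^ 2 + c3 * σ ^ 3 + c4 * σ ^ 4
        + c5 * σ ^ 5 + c6 * σ ^ 6))
      = c0 + c1 / 2 + c2 / 3 + c3 / 4 + c4 / 5 + c5 / 6 + c6 / 7 := by
  have h : ∀ (c : ℝ) (n : ℕ), (∫ σ in (0:ℝ)..1, c * σ ^ n) = c / (n + 1) := by
    intro c n
    rw [intervalIntegral.integral_const_mul, integral_pow]
    norm_num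
    rw [div_eq_mul_inv]
  have hi : ∀ (c : ℝ) (n : ℕ), IntervalIntegrable (fun σ : ℝ => c * σ ^ n)
      MeasureTheory.volume 0 1 := fun c n =>
    ((continuous_const.mul (continuous_pow n)).intervalIntegrable 0 1)
  have h0 : IntervalIntegrable (fun _ : ℝ => c0) MeasureTheory.volume 0 1 :=
    intervalIntegrable_const
  have h1 : IntervalIntegrable (fun σ : ℝ => c1 * σ) MeasureTheory.volume 0 1 :=
    (continuous_const.mul continuous_id).intervalIntegrable 0 1
  have e1 : (∫ σ in (0:ℝ)..1, c1 * σ) = c1 / 2 := by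
    have := h c1 1; norm_num at this ⊢; linarith [this]
  rw [intervalIntegral.integral_add ((((((h0.add h1).add (hi c2 2)).add (hi c3 3)).add
      (hi c4 4)).add (hi c5 5))) (hi c6 6),
    intervalIntegral.integral_add (((((h0.add h1).add (hi c2 2)).add (hi c3 3)).add
      (hi c4 4))) (hi c5 5),
    intervalIntegral.integral_add ((((h0.add h1).add (hi c2 2)).add (hi c3 3))) (hi c4 4),
    intervalIntegral.integral_add (((h0.add h1).add (hi c2 2))) (hi c3 3),
    intervalIntegral.integral_add ((h0.add h1)) (hi c2 2),
    intervalIntegral.integral_add h0 h1,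
    intervalIntegral.integral_const, e1, h c2 2, h c3 3, h c4 4, h c5 5, h c6 6]
  norm_num

/-- The coefficient of the eighth-order four-stage energy-preserving
collocation method satisfies the order conditions
`∫₀¹ A_{τ,σ} σ^{k-1} dσ = τᵏ/k` for `k = 1, 2, 3, 4`. -/
theorem eighth_order_coefficient_order_conditions
    (A : ℝ → ℝ → ℝ)
    (hA : ∀ τ σ : ℝ, A τ σ =
      (16 * τ - 60 * τ ^ 2 + 80 * τ ^ 3 - 35 * τ ^ 4)
        + (-120 * τ + 600 * τ ^ 2 - 900 * τ ^ 3 + 420 * τ ^ 4) * σ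
        + (240 * τ - 1350 * τ ^ 2 + 2160 * τ ^ 3 - 1050 * τ ^ 4) * σ ^ 2
        + (-140 * τ + 840 * τ ^ 2 - 1400 * τ ^ 3 + 700 * τ ^ 4) * σ ^ 3) :
    ∀ τ : ℝ, ∀ k ∈ ({1, 2, 3, 4} : Finset ℕ),
      (∫ σ in (0:ℝ)..1, A τ σ * σ ^ (k - 1)) = τ ^ k / (k : ℝ) := by
  intro τ k hk
  simp only [hA]
  set c0 := 16 * τ - 60 * τ ^ 2 + 80 * τ ^ 3 - 35 * τ ^ 4 with hc0
  set c1 := -120 * τ + 600 * τ ^ 2 - 900 * τ ^ 3 + 420 * τ ^ 4 with hc1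
  set c2 := 240 * τ - 1350 * τ ^ 2 + 2160 * τ ^ 3 - 1050 * τ ^ 4 with hc2
  set c3 := -140 * τ + 840 * τ ^ 2 - 1400 * τ ^ 3 + 700 * τ ^ 4 with hc3
  fin_cases hk
  · rw [show ((1:ℕ) - 1) = 0 from rfl]
    rw [intervalIntegral.integral_congr (g := fun σ : ℝ =>
      c0 + c1 * σ + c2 * σ ^ 2 + c3 * σ ^ 3 + 0 * σ ^ 4 + 0 * σ ^ 5 + 0 * σ ^ 6)
      (fun σ _ => by ring), poly_integral]
    rw [hc0, hc1, hc2, hc3]; push_cast; ring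
  · rw [show ((2:ℕ) - 1) = 1 from rfl]
    rw [intervalIntegral.integral_congr (g := fun σ : ℝ =>
      0 + c0 * σ + c1 * σ ^ 2 + c2 * σ ^ 3 + c3 * σ ^ 4 + 0 * σ ^ 5 + 0 * σ ^ 6)
      (fun σ _ => by ring), poly_integral]
    rw [hc0, hc1, hc2, hc3]; ring
  · rw [show ((3:ℕ) - 1) = 2 from rfl]
    rw [intervalIntegral.integral_congr (g := fun σ : ℝ =>
      0 + 0 * σ + c0 * σ ^ 2 + c1 * σ ^ 3 + c2 * σ ^ 4 + c3 * σ ^ 5 + 0 * σ ^ 6)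
      (fun σ _ => by ring), poly_integral]
    rw [hc0, hc1, hc2, hc3]; ring
  · rw [show ((4:ℕ) - 1) = 3 from rfl]
    rw [intervalIntegral.integral_congr (g := fun σ : ℝ =>
      0 + 0 * σ + 0 * σ ^ 2 + c0 * σ ^ 3 + c1 * σ ^ 4 + c2 * σ ^ 5 + c3 * σ ^ 6)
      (fun σ _ => by ring), poly_integral]
    rw [hc0, hc1, hc2, hc3]; ring
end

section
/- Let $c_1, \dots, c_s$ be distinct real numbers with Lagrange basis polynomials $\ell_i$ and weights $b_i = \int_0^1 \ell_i \neq 0$. Let $\eta : \mathbb{R} \to \mathbb{R}$ be continuous and set $\phi(t) = \int_{t_0+h/2}^{t} \eta(s)\,ds$ (so that the diagonal damping matrix $D(t) = \eta(t) I_N$ has equal diagonal elements). Let $f : \mathbb{R}^N \to \mathbb{R}^N$ be continuous and $c \in \mathbb{R}^N$ with $c^T f(y) = 0$ for all $y$ (so that $M(x) = c^T x$ is a linear invariant of $\dot{x} = f(x)$). Let $v : \mathbb{R} \to \mathbb{R}^N$ be a polynomial map of degree at most $s$ with $v(t_0) = e^{\phi(t_0)} x_0$ and collocation conditions $\dot{v}(t_0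 + c_i h) = \frac{1}{b_i}\int_0^1 \ell_i(\tau) f(v(t_0+\tau h))\,d\tau$ for $i = 1, \dots, s$, and set $x_1 = e^{-\phi(t_0+h)} v(t_0+h)$. Then $c^T x_1 = e^{-\int_{t_0}^{t_0+h} \eta(s)\,ds}\, c^T x_0$, i.e., the exponential collocation method preserves the exact dissipation rate of the linear invariant $M$. -/
open Matrix MeasureTheory

/-! Along the collocation polynomial `v`, the scalar `t ↦ mᵀ v(t)` is a polynomial of degree at
most `s`. At each node `t₀ + cᵢ h` its derivative is `bᵢ⁻¹ ∫ ℓᵢ(τ) mᵀ f(v(t₀ + τ h)) dτ = 0`; a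
polynomial of degree below `s` with `s` distinct roots vanishes, so `mᵀ v` is constant. The
exponential factors then combine through `φ(t₀ + h) = φ(t₀) + ∫_{t₀}^{t₀+h} η`. -/

/-- No integrability is needed: a non-integrable `g` has integral `0`. -/
theorem ContinuousLinearMap.map_intervalIntegral_eq_zero {𝕜 E F : Type*} [RCLike 𝕜]
    [NormedAddCommGroup E] [NormedSpace ℝ E] [NormedSpace 𝕜 E] [CompleteSpace E]
    [NormedAddCommGroup F] [NormedSpace ℝ F] [NormedSpace 𝕜 F] [CompleteSpace F]
    (L : E →L[𝕜] F) {g : ℝ → E} {μ : Measure ℝ} {a b : ℝ} (hg : ∀ x, L (g x) = 0) :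
    L (∫ x in a..b, g x ∂μ) = 0 := by
  by_cases hint : IntervalIntegrable g μ a b
  · simp [← L.intervalIntegral_comp_comm hint, hg]
  · rw [intervalIntegral.integral_undef hint, map_zero]

namespace Polynomial

theorem derivative_eq_zero_of_eval_eq_zero {R ι : Type*} [CommRing R] [IsDomain R] [Fintype ι]
    {p : R[X]} (hp : p.natDegree ≤ Fintype.card ι) {x : ι → R} (hx : Function.Injective x)
    (hroots : ∀ i, p.derivative.eval (x i) = 0) : p.derivative = 0 := by
  rcases eq_or_ne p.natDegree 0 with hp0 | hp0
  · exact derivative_of_natDegree_zero hp0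
  · exact eq_zero_of_natDegree_lt_card_of_eval_eq_zero _ hx hroots
      ((natDegree_derivative_lt hp0).trans_le hp)

theorem eval_eq_of_derivative_eq_zero {R : Type*} [CommRing R] [IsAddTorsionFree R] {p : R[X]}
    (hp : p.derivative = 0) (a b : R) : p.eval a = p.eval b := by
  rw [eq_C_of_natDegree_eq_zero (derivative_eq_zero.mp hp)]
  simp

end Polynomial

theorem eq_of_hasDerivAt_eq_zero_of_polynomial {ι : Type*} [Fintype ι] {w : ℝ → ℝ}
    (hw : ∃ p : Polynomial ℝ, p.natDegree ≤ Fintype.card ι ∧ ∀ t, w t = p.eval t)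
    {x : ι → ℝ} (hx : Function.Injective x) (hderiv : ∀ i, HasDerivAt w 0 (x i)) (a b : ℝ) :
    w a = w b := by
  obtain ⟨p, hpdeg, hp⟩ := hw
  obtain rfl : w = fun t => p.eval t := funext hp
  refine p.eval_eq_of_derivative_eq_zero
    (p.derivative_eq_zero_of_eval_eq_zero hpdeg hx fun i => ?_) a b
  exact (p.hasDerivAt (x i)).unique (hderiv i)

theorem exists_polynomial_dotProduct {R n : Type*} [CommRing R] [Fintype n] {d : ℕ}
    {v : R → n → R} (hv : ∀ k, ∃ p : Polynomial R, p.natDegree ≤ d ∧ ∀ t, v t k = p.eval t)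
    (m : n → R) : ∃ p : Polynomial R, p.natDegree ≤ d ∧ ∀ t, m ⬝ᵥ v t = p.eval t := by
  choose p hpdeg hp using hv
  refine ⟨∑ k, Polynomial.C (m k) * p k, ?_, fun t => ?_⟩
  · exact Polynomial.natDegree_sum_le_of_forall_le _ _ fun k _ =>
      (Polynomial.natDegree_C_mul_le _ _).trans (hpdeg k)
  · simp [Polynomial.eval_finsetSum, dotProduct, hp]

theorem exponential_collocation_linear_invariant_dissipation_general
    {N s : ℕ}
    (c : Fin s → ℝ) (hc : Function.Injective c)
    (ℓ : Fin s → ℝ → ℝ)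
    (b : Fin s → ℝ)
    (t₀ h : ℝ)
    (η : ℝ → ℝ) (hη : Continuous η)
    (φ : ℝ → ℝ) (hφ : ∀ t, φ t = ∫ u in (t₀ + h/2)..t, η u)
    (f : (Fin N → ℝ) → (Fin N → ℝ))
    (m : Fin N → ℝ) (hm : ∀ y, dotProduct m (f y) = 0)
    (x₀ x₁ : Fin N → ℝ)
    (v : ℝ → (Fin N → ℝ))
    (hv : ∀ k, ∃ p : Polynomial ℝ, p.natDegree ≤ s ∧ ∀ t, v t k = p.eval t)
    (hv0 : v t₀ = Real.exp (φ t₀) • x₀)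
    (hcoll : ∀ i, HasDerivAt v
      ((b i)⁻¹ • ∫ τ in (0:ℝ)..1, ℓ i τ • f (v (t₀ + τ * h)))
      (t₀ + c i * h))
    (hx1 : x₁ = Real.exp (-φ (t₀ + h)) • v (t₀ + h)) :
    dotProduct m x₁ =
      Real.exp (-(∫ u in t₀..(t₀ + h), η u)) * dotProduct m x₀ := by
  have hφ_step : φ (t₀ + h) = φ t₀ + ∫ u in t₀..(t₀ + h), η u := by
    rw [hφ, hφ, intervalIntegral.integral_add_adjacent_intervals
      (hη.intervalIntegrable _ _) (hη.intervalIntegrable _ _)]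
  have hM_const : m ⬝ᵥ v (t₀ + h) = m ⬝ᵥ v t₀ := by
    rcases eq_or_ne h 0 with rfl | hh
    · rw [add_zero]
    let M : (Fin N → ℝ) →L[ℝ] ℝ := LinearMap.toContinuousLinearMap (dotProductBilin ℝ ℝ m)
    have hM : ∀ x, M x = m ⬝ᵥ x := fun x => by simp [M]
    have hnodes : Function.Injective fun i => t₀ + c i * h := fun i j hij =>
      hc (mul_right_cancel₀ hh (add_left_cancel hij))
    refine eq_of_hasDerivAt_eq_zero_of_polynomial
      (by rw [Fintype.card_fin]; exact exists_polynomial_dotProduct hv m) hnodes (fun i => ?_) _ _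
    have hM_integral : M (∫ τ in (0:ℝ)..1, ℓ i τ • f (v (t₀ + τ * h))) = 0 :=
      M.map_intervalIntegral_eq_zero fun τ => by rw [M.map_smul, hM, hm, smul_zero]
    have hM_coll := (M.hasFDerivAt.comp_hasDerivAt _ (hcoll i)).congr_deriv
      (by rw [M.map_smul, hM_integral, smul_zero])
    simpa only [Function.comp_def, hM] using hM_coll
  rw [hx1, dotProduct_smul, hM_const, hv0, dotProduct_smul, smul_eq_mul, smul_eq_mul, ← mul_assoc,
    ← Real.exp_add, hφ_step]
  ring_nf

/-- For scalar damping `D(t) = η(t) Iₙ` (so `e^{Y(t)}` reduces to the scalar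
`e^{φ(t)}` with `φ(t) = ∫_{t₀+h/2}^t η(s) ds`), the exponential collocation method preserves
the exact dissipation rate of a linear invariant `M(x) = mᵀx` (with `mᵀ f(y) = 0` for all
`y`): if `v` is a collocation polynomial of degree at most `s` with `v(t₀) = e^{φ(t₀)} x₀`
and `x₁ = e^{-φ(t₀+h)} v(t₀+h)`, then `mᵀ x₁ = e^{-∫_{t₀}^{t₀+h} η} mᵀ x₀`. -/
theorem exponential_collocation_linear_invariant_dissipation
    {N s : ℕ}
    (c : Fin s → ℝ) (hc : Function.Injective c)
    (ℓ : Fin s → ℝ → ℝ)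
    (hℓ : ∀ i τ, ℓ i τ = ∏ j ∈ Finset.univ.erase i, (τ - c j) / (c i - c j))
    (b : Fin s → ℝ) (hb : ∀ i, b i = ∫ τ in (0:ℝ)..1, ℓ i τ)
    (hbne : ∀ i, b i ≠ 0)
    (t₀ h : ℝ)
    (η : ℝ → ℝ) (hη : Continuous η)
    (φ : ℝ → ℝ) (hφ : ∀ t, φ t = ∫ u in (t₀ + h/2)..t, η u)
    (f : (Fin N → ℝ) → (Fin N → ℝ)) (hf : Continuous f)
    (m : Fin N → ℝ) (hm : ∀ y, dotProduct m (f y) = 0)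
    (x₀ x₁ : Fin N → ℝ)
    (v : ℝ → (Fin N → ℝ))
    (hv : ∀ k, ∃ p : Polynomial ℝ, p.natDegree ≤ s ∧ ∀ t, v t k = p.eval t)
    (hv0 : v t₀ = Real.exp (φ t₀) • x₀)
    (hcoll : ∀ i, HasDerivAt v
      ((b i)⁻¹ • ∫ τ in (0:ℝ)..1, ℓ i τ • f (v (t₀ + τ * h)))
      (t₀ + c i * h))
    (hx1 : x₁ = Real.exp (-φ (t₀ + h)) • v (t₀ + h)) :
    dotProduct m x₁ =
      Real.exp (-(∫ u in t₀..(t₀ + h), η u)) * dotProduct m x₀ :=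
  exponential_collocation_linear_invariant_dissipation_general c hc ℓ b t₀ h η hη φ hφ f m hm x₀ x₁
    v hv hv0 hcoll hx1
end

section
/- Let $N \ge 3$, $\Delta x > 0$, $\gamma \in \mathbb{R}$, and let $D_1 \in \mathbb{R}^{N\times N}$ be the periodic central-difference matrix with entries $(D_1)_{i,i+1} = \frac{1}{2\Delta x}$, $(D_1)_{i,i-1} = -\frac{1}{2\Delta x}$ (indices modulo $N$), all other entries zero. Let $\mathbf{u} : \mathbb{R} \to \mathbb{R}^N$ be differentiable and solve the semi-discrete damped Burger's equation $\dot{\mathbf{u}}(t) = -\frac{1}{2} D_1 \nabla H(\mathbf{u}(t)) - 2\gamma\, \mathbf{u}(t)$, where $H(\mathbf{u}) = \frac{1}{3}\sum_{j=1}^{N}(u^j)^3$ so that $\nabla H(\mathbf{u})$ is the componentwise square of $\mathbf{u}$. Then the mass $M(\mathbf{u}) = \sum_{k=1}^{N} u^k$ is a conformal invariant: for all $t \ge 0$, $M(\mathbf{u}(t)) = e^{-2\gamma t} M(\mathbf{u}(0))$. -/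
/-!
Every column of the periodic central-difference matrix contains exactly one `+1/(2Δx)` and one
`-1/(2Δx)` (they sit in different rows because `2 ≠ 0` modulo `N ≥ 3`), so `1ᵀ D₁ = 0` and the
flux term `-½ D₁ ∇H(u)` does not change the mass. Hence `M' = -2γ M`, and `e^{2γt} M(u(t))` is
constant.
-/

open Matrix

theorem Fin.one_add_one_ne_zero {N : ℕ} [NeZero N] (hN : 3 ≤ N) : (1 : Fin N) + 1 ≠ 0 := by
  rw [Ne, Fin.ext_iff, Fin.val_add, Fin.val_one', Nat.one_mod_eq_one.mpr (by omega)]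
  simp [Nat.mod_eq_of_lt (show 2 < N by omega)]

theorem sum_ite_add_ite_sub_neg {G R : Type*} [AddGroup G] [Fintype G] [DecidableEq G]
    [AddCommGroup R] {c : G} (hc : c + c ≠ 0) (a : R) (j : G) :
    ∑ i, (if j = i + c then a else if j = i - c then -a else 0) = 0 := by
  have hne : j - c ≠ j + c := by
    intro h
    apply hc
    simpa [sub_eq_add_neg, neg_eq_iff_add_eq_zero] using h
  have hsplit : ∀ i, (if j = i + c then a else if j = i - c then -a else 0) =
      (if i = j - c then a else 0) + (if i = j + c then -a else 0) := by
    intro i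
    simp only [eq_comm (a := j), ← eq_sub_iff_add_eq, sub_eq_iff_eq_add]
    by_cases h : i = j - c
    · subst h; simp [hne]
    · simp [h]
  simp [Finset.sum_add_distrib, hsplit]

theorem Matrix.sum_mulVec_eq_zero_of_sum_col_eq_zero {n R : Type*} [Fintype n] [CommSemiring R]
    {M : Matrix n n R} (hM : ∀ j, ∑ i, M i j = 0) (x : n → R) : ∑ i, (M *ᵥ x) i = 0 := by
  simp only [mulVec, dotProduct]
  rw [Finset.sum_comm]
  simp [← Finset.sum_mul, hM]

theorem HasDerivAt.sum_apply {ι : Type*} [Fintype ι] {u : ℝ → ι → ℝ} {u' : ι → ℝ} {t : ℝ}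
    (hu : HasDerivAt u u' t) : HasDerivAt (fun t => ∑ k, u t k) (∑ k, u' k) t :=
  HasDerivAt.fun_sum fun k _ => hasDerivAt_pi.mp hu k

theorem eq_exp_mul_of_hasDerivAt_const_mul {f : ℝ → ℝ} {c : ℝ}
    (hf : ∀ t, HasDerivAt f (c * f t) t) (t : ℝ) : f t = Real.exp (c * t) * f 0 := by
  have hconst : ∀ s, HasDerivAt (fun s => Real.exp (-c * s) * f s) 0 s := fun s =>
    (((hasDerivAt_id s).const_mul (-c)).exp.mul (hf s)).congr_deriv (by simp; ring)
  have h := is_const_of_deriv_eq_zero (fun s => (hconst s).differentiableAt)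
    (fun s => (hconst s).deriv) t 0
  rw [mul_zero, Real.exp_zero, one_mul] at h
  rw [← h, ← mul_assoc, ← Real.exp_add]
  simp

theorem damped_burgers_mass_dissipation_general
    {N : ℕ} [NeZero N] (hN : 3 ≤ N) (Δx : ℝ) (γ : ℝ)
    (D₁ : Matrix (Fin N) (Fin N) ℝ)
    (hD₁ : ∀ i j : Fin N, D₁ i j =
      if j = i + 1 then 1 / (2 * Δx) else if j = i - 1 then -(1 / (2 * Δx)) else 0)
    (u : ℝ → (Fin N → ℝ))
    (hu : ∀ t, HasDerivAt u
      (-((1:ℝ)/2) • D₁.mulVec (fun k => u t k ^ 2) - (2 * γ) • u t) t) :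
    ∀ t, 0 ≤ t → (∑ k, u t k) = Real.exp (-(2 * γ * t)) * ∑ k, u 0 k := by
  have hcol : ∀ j, ∑ i, D₁ i j = 0 := fun j => by
    simpa only [hD₁] using sum_ite_add_ite_sub_neg (Fin.one_add_one_ne_zero hN) (1 / (2 * Δx)) j
  have hmass : ∀ t, HasDerivAt (fun t => ∑ k, u t k) (-(2 * γ) * ∑ k, u t k) t := fun t =>
    (hu t).sum_apply.congr_deriv <| by
      simp only [Pi.sub_apply, Pi.smul_apply, smul_eq_mul, Finset.sum_sub_distrib,
        ← Finset.mul_sum, sum_mulVec_eq_zero_of_sum_col_eq_zero hcol]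
      ring
  intro t _
  rw [eq_exp_mul_of_hasDerivAt_const_mul hmass t, neg_mul]

/-- For a differentiable solution `u` of the semi-discrete damped Burger's
equation `u̇ = -½ D₁ ∇H(u) - 2γ u` with `H(u) = ⅓ ∑ (uʲ)³` (so `∇H(u)` is the componentwise
square of `u`) and `D₁` the periodic central-difference matrix, the mass `M(u) = ∑ uᵏ` is a
conformal invariant: `M(u(t)) = e^{-2γt} M(u(0))` for all `t ≥ 0`. -/
theorem damped_burgers_mass_dissipation
    {N : ℕ} [NeZero N] (hN : 3 ≤ N) (Δx : ℝ) (hΔx : 0 < Δx) (γ : ℝ)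
    (D₁ : Matrix (Fin N) (Fin N) ℝ)
    (hD₁ : ∀ i j : Fin N, D₁ i j =
      if j = i + 1 then 1 / (2 * Δx) else if j = i - 1 then -(1 / (2 * Δx)) else 0)
    (u : ℝ → (Fin N → ℝ))
    (hu : ∀ t, HasDerivAt u
      (-((1:ℝ)/2) • D₁.mulVec (fun k => u t k ^ 2) - (2 * γ) • u t) t) :
    ∀ t, 0 ≤ t → (∑ k, u t k) = Real.exp (-(2 * γ * t)) * ∑ k, u 0 k :=
  damped_burgers_mass_dissipation_general hN Δx γ D₁ hD₁ u hu
end
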